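/- Let l be a positive integer, n a nonzero integer, 0 ≤ j ≤ |n|−1, 0 ≤ u ≤ l−1, and let g : ℝ → ℂ be a Schwartz function. Then for all h = (p₀,q₀,s₀) ∈ ℝ³ and all (p,q,s) ∈ ℝ³, (W_n^{j,u}(π_n(h)g))(p,q,s) = (W_n^{j,u}g)((p,q,s) ⋆ h); that is, the Weil–Brezin transform intertwines the Schrödinger representation π_n with right translation on the Heisenberg group. -/
import Mathlib


noncomputable section

abbrev H3 := ℝ × ℝ × ℝ

/-- polarized Heisenberg multiplication -/
def Hmul (a b : H3) : H3 := (a.1 + b.1, a.2.1 + b.2.1, a.2.2 + b.2.2 + a.1 * b.2.1)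

/-- Schrödinger representation π_β -/
def schrodinger (β : ℝ) (h : H3) (g : ℝ → ℂ) : ℝ → ℂ := fun x =>
  Complex.exp (2 * Real.pi * Complex.I * (β : ℂ) * ((h.2.2 : ℂ) + (h.2.1 : ℂ) * (x : ℂ))) *
    g (x + h.1)

/-- Weil–Brezin transform associated to the lattice N_l -/
def WB (l : ℕ) (n j u : ℤ) (g : ℝ → ℂ) : H3 → ℂ := fun x =>
  Complex.exp (2 * Real.pi * Complex.I * (n : ℂ) * (x.2.2 : ℂ)) *
    ∑' k : ℤ,
      g (x.1 + (k : ℝ) + (j : ℝ) / |(n : ℝ)| + (u : ℝ) / ((l : ℝ) * (n : ℝ))) *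
        Complex.exp (2 * Real.pi * Complex.I * (n : ℂ) *
          ((((k : ℝ) + (j : ℝ) / |(n : ℝ)| + (u : ℝ) / ((l : ℝ) * (n : ℝ))) : ℝ) : ℂ) *
          (x.2.1 : ℂ))

lemma exp_aux (a b c d e v : ℂ) (h : a + b + c = d + e) :
    Complex.exp a * (Complex.exp b * v * Complex.exp c) =
      Complex.exp d * (v * Complex.exp e) := by
  have h1 : Complex.exp a * (Complex.exp b * v * Complex.exp c)
      = Complex.exp (a + b + c) * v := by
    rw [Complex.exp_add, Complex.exp_add]; ring
  have h2 : Complex.exp d * (v * Complex.exp e) = Complex.exp (d + e) * v := by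
    rw [Complex.exp_add]; ring
  rw [h1, h2, h]

/-- the Weil–Brezin transform intertwines the Schrödinger representation π_n
with right translation on the Heisenberg group. -/
theorem WB_intertwines (l : ℕ) (hl : 0 < l) (n : ℤ) (hn : n ≠ 0) (j u : ℤ)
    (hj0 : 0 ≤ j) (hj1 : j ≤ |n| - 1) (hu0 : 0 ≤ u) (hu1 : u ≤ (l : ℤ) - 1)
    (g : SchwartzMap ℝ ℂ) :
    ∀ h x : H3, WB l n j u (schrodinger (n : ℝ) h g) x = WB l n j u g (Hmul x h) := by
  intro h x
  obtain ⟨p₀, q₀, s₀⟩ := h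
  obtain ⟨p, q, s⟩ := x
  simp only [WB, schrodinger, Hmul]
  rw [← tsum_mul_left, ← tsum_mul_left]
  refine tsum_congr fun k => ?_
  rw [show p + (k : ℝ) + (j : ℝ) / |(n : ℝ)| + (u : ℝ) / ((l : ℝ) * (n : ℝ)) + p₀
      = p + p₀ + (k : ℝ) + (j : ℝ) / |(n : ℝ)| + (u : ℝ) / ((l : ℝ) * (n : ℝ)) by ring]
  apply exp_aux
  push_cast
  ring

end
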